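/- Let Ω ⊆ ℝⁿ (n ≥ 2) be open, let p : closure(Ω) → [1,∞) be log-Hölder continuous with p⁺ < n, let r : Ω → ℝ be bounded, and let a ∈ L^∞(Ω) with a ≥ 0. Define Φ and Ψ as in the context and assume the embedding hypothesis with constant c₁. For x ∈ closure(Ω) and R ∈ (0,1] with |A_R| ≤ 1, let A_R := B_R(x) ∩ Ω and let R̃ ∈ (0,R] be the smallest radius with |A_{R̃}| = |A_R|/2. Then there is a constant C > 0 depending only on n and c₁ such that: (i) if r(x) < 0 for all x ∈ Ω, then R − R̃ ≤ C (1+‖a‖_∞)^{1/p⁻} 2^{1/p⁻ − 1/n + 1} |A_R|^{1/p⁺_{A_R} − 1/p⁻_{A_R} + 1/n}; (ii) if r takes both a negative value and a nonnegative value on Ω, and moreover |A_R| < 1/2 and sup_{A_R} r ≥ 0, then R − R̃ ≤ C (1+‖a‖_∞)^{1/p⁻} 2^{1/p⁻ − 1/n} |A_R|^{1/p⁺_{A_R} − 1/p⁻_{A_R} + 1/n} (log(e + 1/|A_R|))^{r⁺_{A_R}}. -/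

import Mathlib

open MeasureTheory Set
open scoped ENNReal

noncomputable def Phi2 {n : ℕ} (p r a : EuclideanSpace ℝ (Fin n) → ℝ)
    (x : EuclideanSpace ℝ (Fin n)) (t : ℝ) : ℝ :=
  t ^ p x + a x * t ^ p x * (Real.log (Real.exp 1 + t)) ^ r x

/-- The Sobolev conjugate exponent `p*(x) = (1/p(x) − 1/n)⁻¹`. -/
noncomputable def pStar (n : ℕ) (p : EuclideanSpace ℝ (Fin n) → ℝ)
    (x : EuclideanSpace ℝ (Fin n)) : ℝ :=
  (1 / p x - 1 / (n : ℝ))⁻¹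

/-- The second term vanishes when `a x = 0`, as `0 ^ (p*/p) = 0`. -/
noncomputable def Psi {n : ℕ} (p r a : EuclideanSpace ℝ (Fin n) → ℝ)
    (x : EuclideanSpace ℝ (Fin n)) (t : ℝ) : ℝ :=
  t ^ pStar n p x + a x ^ (pStar n p x / p x) * t ^ pStar n p x *
    (Real.log (Real.exp 1 + t / a x ^ ((p x - 1) / p x))) ^ (r x * pStar n p x / p x)

/-- Valued in `ℝ≥0∞`, so that `inf ∅ = ∞`. -/
noncomputable def luxNorm {n : ℕ} (Ω : Set (EuclideanSpace ℝ (Fin n)))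
    (Φ : EuclideanSpace ℝ (Fin n) → ℝ → ℝ)
    (u : EuclideanSpace ℝ (Fin n) → ℝ) : ℝ≥0∞ :=
  sInf ((fun l : ℝ => ENNReal.ofReal l) ''
    {l : ℝ | 0 < l ∧ (∫⁻ x in Ω, ENNReal.ofReal (Φ x (|u x| / l))) ≤ 1})

/-!
Test the embedding on a `C¹` cutoff `u` equal to `1` on `B_{R̃}(x)`, vanishing outside
`B_{(R̃+R)/2}(x)`, with `|∇u| ≤ 2K/(R − R̃)` for `K` a Lipschitz constant of the smooth step.
Since `|A_{R̃}| = |A_R|/2` and `Ψ(y,t) ≥ t^{p*(y)}`, the Ψ-modular of `u/λ` for `λ < 1` is at least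
`λ^{-π}|A_R|/2` with `1/π = 1/p⁻_{A_R} − 1/n`, whence `‖u‖_Ψ ≥ (|A_R|/2)^{1/π}`.
If `G` bounds `log(e+t)^{r(y)}` on `A_R` for `t ≤ 1/|A_R|` (`G = 1` when `r < 0`,
`G = log(e+1/|A_R|)^{r⁺_{A_R}}` otherwise), then `Φ(y,t) ≤ N t^{p(y)}` there with `N = 1 + ‖a‖_∞ G`,
and `λ = N^{1/p⁻_{A_R}} |A_R|^{1/p⁺_{A_R}}` makes the Φ-modular of any function bounded by `1`
and supported in `B_R(x)` at most `1`. Comparing both bounds through the embedding gives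
`R − R̃ ≲ (1+‖a‖_∞)^{1/p⁻} G |A_R|^{1/p⁺_{A_R} − 1/π}`.
-/

theorem one_le_log_exp_one_add {t : ℝ} (ht : 0 ≤ t) : 1 ≤ Real.log (Real.exp 1 + t) := by
  rw [Real.le_log_iff_exp_le (by positivity)]
  linarith

theorem log_exp_one_add_rpow_le {t T ρ σ : ℝ} (ht : 0 ≤ t) (htT : t ≤ T) (hρσ : ρ ≤ σ)
    (hσ : 0 ≤ σ) : Real.log (Real.exp 1 + t) ^ ρ ≤ Real.log (Real.exp 1 + T) ^ σ := by
  have hT : 1 ≤ Real.log (Real.exp 1 + T) := one_le_log_exp_one_add (ht.trans htT)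
  rcases le_or_gt 0 ρ with hρ | hρ
  · calc Real.log (Real.exp 1 + t) ^ ρ ≤ Real.log (Real.exp 1 + T) ^ ρ := by
          gcongr
          linarith [one_le_log_exp_one_add ht]
      _ ≤ Real.log (Real.exp 1 + T) ^ σ := Real.rpow_le_rpow_of_exponent_le hT hρσ
  · exact (Real.rpow_le_one_of_one_le_of_nonpos (one_le_log_exp_one_add ht) hρ.le).trans
      (Real.one_le_rpow hT hσ)

theorem mul_rpow_le_inv {N τ pm pM q t : ℝ} (hN : 1 ≤ N) (hτ : 0 < τ) (hτ1 : τ ≤ 1)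
    (hpm : 0 < pm) (hq : q ∈ Icc pm pM) (ht : 0 ≤ t)
    (htle : t ≤ (N ^ (1 / pm) * τ ^ (1 / pM))⁻¹) :
    N * t ^ q ≤ τ⁻¹ := by
  have hq0 : 0 < q := hpm.trans_le hq.1
  have hpM : 0 < pM := hq0.trans_le hq.2
  have hN0 : 0 < N := zero_lt_one.trans_le hN
  have hNq : N ^ (-(q / pm)) ≤ N⁻¹ := by
    rw [Real.rpow_neg hN0.le]
    gcongr
    exact Real.self_le_rpow_of_one_le hN ((one_le_div₀ hpm).2 hq.1)
  have hτq : τ ^ (-(q / pM)) ≤ τ⁻¹ := by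
    rw [← Real.rpow_neg_one]
    exact Real.rpow_le_rpow_of_exponent_ge hτ hτ1 (neg_le_neg ((div_le_one₀ hpM).2 hq.2))
  calc N * t ^ q ≤ N * ((N ^ (1 / pm) * τ ^ (1 / pM))⁻¹) ^ q := by gcongr
    _ = N * N ^ (-(q / pm)) * τ ^ (-(q / pM)) := by
        rw [Real.inv_rpow (by positivity), Real.mul_rpow (by positivity) (by positivity),
          ← Real.rpow_mul hN0.le, ← Real.rpow_mul hτ.le, mul_inv, ← Real.rpow_neg hN0.le,
          ← Real.rpow_neg hτ.le]
        ring_nf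
    _ ≤ N * N⁻¹ * τ⁻¹ := by gcongr
    _ = τ⁻¹ := by rw [mul_inv_cancel₀ hN0.ne', one_mul]

theorem one_add_mul_rpow_le {M G q : ℝ} (hM : 0 ≤ M) (hG : 1 ≤ G) (hq : 1 ≤ q) :
    (1 + M * G) ^ (1 / q) ≤ (1 + M) ^ (1 / q) * G := by
  have hq' : 1 / q ≤ 1 := (div_le_one₀ (by positivity)).2 hq
  calc (1 + M * G) ^ (1 / q) ≤ ((1 + M) * G) ^ (1 / q) := by gcongr; nlinarith
    _ = (1 + M) ^ (1 / q) * G ^ (1 / q) := Real.mul_rpow (by positivity) (by positivity)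
    _ ≤ (1 + M) ^ (1 / q) * G := by gcongr; exact Real.rpow_le_self_of_one_le hG hq'

theorem rpow_le_two_mul_half_rpow {τ e : ℝ} (hτ : 0 ≤ τ) (he1 : e ≤ 1) :
    τ ^ e ≤ 2 * (τ / 2) ^ e := by
  have h2 : (2 : ℝ) ^ e ≤ 2 := Real.rpow_le_self_of_one_le one_le_two he1
  rw [Real.div_rpow hτ zero_le_two, mul_div_left_comm]
  exact le_mul_of_one_le_right (by positivity) ((one_le_div₀ (by positivity)).2 h2)

theorem Real.smoothTransition.exists_lipschitzWith :
    ∃ K : NNReal, 0 < K ∧ LipschitzWith K Real.smoothTransition := by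
  have hderiv_zero : ∀ s ∉ Icc (0 : ℝ) 1, deriv Real.smoothTransition s = 0 := by
    intro s hs
    rcases not_and_or.1 hs with hs | hs
    · have : Real.smoothTransition =ᶠ[nhds s] fun _ => 0 := by
        filter_upwards [Iio_mem_nhds (not_le.1 hs)] with t ht
        exact Real.smoothTransition.zero_of_nonpos ht.le
      simp [this.deriv_eq]
    · have : Real.smoothTransition =ᶠ[nhds s] fun _ => 1 := by
        filter_upwards [Ioi_mem_nhds (not_le.1 hs)] with t ht
        exact Real.smoothTransition.one_of_one_le ht.le
      simp [this.deriv_eq]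
  have hC1 : ContDiff ℝ 1 Real.smoothTransition := Real.smoothTransition.contDiff
  obtain ⟨K, hK⟩ := (hC1.continuous_deriv le_rfl).bounded_above_of_compact_support
    (HasCompactSupport.intro isCompact_Icc hderiv_zero)
  refine ⟨K.toNNReal + 1, by positivity,
    lipschitzWith_of_nnnorm_deriv_le (hC1.differentiable one_ne_zero) fun s => ?_⟩
  rw [← NNReal.coe_le_coe, coe_nnnorm, NNReal.coe_add, NNReal.coe_one]
  linarith [hK s, Real.le_coe_toNNReal K]

theorem exists_contDiff_cutoff {E : Type*} [NormedAddCommGroup E] [InnerProductSpace ℝ E]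
    {K : NNReal} (hK : LipschitzWith K Real.smoothTransition) (x : E) {r₁ r₂ : ℝ}
    (h₁ : 0 < r₁) (h₁₂ : r₁ < r₂) :
    ∃ u : E → ℝ, ContDiff ℝ 1 u ∧ (∀ y, u y ∈ Icc 0 1) ∧
      (∀ y ∈ Metric.closedBall x r₁, u y = 1) ∧ tsupport u ⊆ Metric.closedBall x r₂ ∧
      ∀ y, ‖fderiv ℝ u y‖ ≤ K / (r₂ - r₁) := by
  set u : E → ℝ := fun y => Real.smoothTransition ((r₂ - dist y x) / (r₂ - r₁))
  have hδ : 0 < r₂ - r₁ := sub_pos.2 h₁₂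
  have hone : ∀ y ∈ Metric.closedBall x r₁, u y = 1 := fun y hy =>
    Real.smoothTransition.one_of_one_le <| by
      rw [le_div_iff₀ hδ]; linarith [Metric.mem_closedBall.1 hy]
  refine ⟨u, ?_, fun y => ⟨Real.smoothTransition.nonneg _, Real.smoothTransition.le_one _⟩,
    hone, ?_, fun y => ?_⟩
  · rw [contDiff_iff_contDiffAt]
    intro y
    rcases eq_or_ne y x with rfl | hyx
    · refine (contDiffAt_const (c := (1 : ℝ))).congr_of_eventuallyEq ?_
      filter_upwards [Metric.closedBall_mem_nhds y h₁] with z hz using hone z hz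
    · refine Real.smoothTransition.contDiff.contDiffAt.comp y ?_
      simp_rw [dist_eq_norm]
      exact ((contDiffAt_const.sub ((contDiffAt_norm ℝ (sub_ne_zero.2 hyx)).comp y
        (contDiffAt_id.sub contDiffAt_const))).div_const _)
  · refine closure_minimal (fun y hy => ?_) Metric.isClosed_closedBall
    by_contra hyr
    rw [Metric.mem_closedBall, not_le] at hyr
    exact hy (Real.smoothTransition.zero_of_nonpos
      (div_nonpos_of_nonpos_of_nonneg (by linarith) hδ.le))
  · have hlip : LipschitzWith (K * (Real.toNNReal (r₂ - r₁))⁻¹) u := by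
      refine hK.comp (LipschitzWith.of_dist_le_mul fun y z => ?_)
      rw [NNReal.coe_inv, Real.coe_toNNReal _ hδ.le, Real.dist_eq, ← sub_div, abs_div,
        abs_of_pos hδ, inv_mul_eq_div]
      gcongr
      rw [sub_sub_sub_cancel_left, abs_sub_comm]
      exact abs_dist_sub_le y z x
    simpa [div_eq_mul_inv, hδ.le] using norm_fderiv_le_of_lipschitz ℝ (x₀ := y) hlip

section Luxemburg

variable {n : ℕ} {Ω : Set (EuclideanSpace ℝ (Fin n))} {Φ : EuclideanSpace ℝ (Fin n) → ℝ → ℝ}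
  {u : EuclideanSpace ℝ (Fin n) → ℝ}

theorem luxNorm_le_ofReal {l : ℝ} (hl : 0 < l)
    (h : ∫⁻ y in Ω, ENNReal.ofReal (Φ y (|u y| / l)) ≤ 1) : luxNorm Ω Φ u ≤ ENNReal.ofReal l :=
  sInf_le ⟨l, ⟨hl, h⟩, rfl⟩

theorem ofReal_le_luxNorm {L : ℝ}
    (h : ∀ l, 0 < l → ∫⁻ y in Ω, ENNReal.ofReal (Φ y (|u y| / l)) ≤ 1 → L ≤ l) :
    ENNReal.ofReal L ≤ luxNorm Ω Φ u :=
  le_sInf <| by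
    rintro _ ⟨l, ⟨hl, hint⟩, rfl⟩
    exact ENNReal.ofReal_le_ofReal (h l hl hint)

theorem luxNorm_le_of_le_inv {A : Set (EuclideanSpace ℝ (Fin n))} (hA : MeasurableSet A)
    {τ l : ℝ} (hτ : 0 < τ) (hl : 0 < l) (hvol : volume (A ∩ Ω) ≤ ENNReal.ofReal τ)
    (hin : ∀ y ∈ A ∩ Ω, Φ y (|u y| / l) ≤ τ⁻¹) (hout : ∀ y ∈ Ω \ A, Φ y (|u y| / l) ≤ 0) :
    luxNorm Ω Φ u ≤ ENNReal.ofReal l := by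
  refine luxNorm_le_ofReal hl ?_
  have hpt : ∀ y ∈ Ω,
      ENNReal.ofReal (Φ y (|u y| / l)) ≤ A.indicator (fun _ => ENNReal.ofReal τ⁻¹) y := by
    intro y hy
    by_cases hyA : y ∈ A
    · simpa [hyA] using ENNReal.ofReal_le_ofReal (hin y ⟨hyA, hy⟩)
    · simp [hyA, ENNReal.ofReal_eq_zero.2 (hout y ⟨hy, hyA⟩)]
  calc ∫⁻ y in Ω, ENNReal.ofReal (Φ y (|u y| / l))
      ≤ ∫⁻ y in Ω, A.indicator (fun _ => ENNReal.ofReal τ⁻¹) y :=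
        setLIntegral_mono (measurable_const.indicator hA) hpt
    _ = ENNReal.ofReal τ⁻¹ * volume (A ∩ Ω) := by
        rw [lintegral_indicator hA, setLIntegral_const, Measure.restrict_apply hA]
    _ ≤ ENNReal.ofReal τ⁻¹ * ENNReal.ofReal τ := by gcongr
    _ = 1 := by
        rw [← ENNReal.ofReal_mul (by positivity), inv_mul_cancel₀ hτ.ne', ENNReal.ofReal_one]

theorem ofReal_rpow_inv_le_luxNorm {S : Set (EuclideanSpace ℝ (Fin n))} (hS : MeasurableSet S)
    (hSΩ : S ⊆ Ω) {m s : ℝ} (hm : 0 ≤ m) (hm1 : m ≤ 1) (hs : 0 < s)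
    (hvol : ENNReal.ofReal m ≤ volume S) (hu : ∀ y ∈ S, |u y| = 1)
    (hΦ : ∀ y ∈ S, ∀ t, 1 ≤ t → t ^ s ≤ Φ y t) :
    ENNReal.ofReal (m ^ s⁻¹) ≤ luxNorm Ω Φ u := by
  refine ofReal_le_luxNorm fun l hl hint => ?_
  rcases le_or_gt 1 l with h1l | hl1
  · exact (Real.rpow_le_one hm hm1 (by positivity)).trans h1l
  have hmod : ENNReal.ofReal ((l ^ s)⁻¹ * m) ≤ 1 := by
    rw [ENNReal.ofReal_mul (by positivity)]
    calc ENNReal.ofReal (l ^ s)⁻¹ * ENNReal.ofReal m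
        ≤ ∫⁻ _ in S, ENNReal.ofReal (l ^ s)⁻¹ := by rw [setLIntegral_const]; gcongr
      _ ≤ ∫⁻ y in S, ENNReal.ofReal (Φ y (|u y| / l)) := by
          refine setLIntegral_mono' hS fun y hy => ENNReal.ofReal_le_ofReal ?_
          rw [hu y hy, ← Real.inv_rpow hl.le, one_div]
          exact hΦ y hy _ (one_le_inv₀ hl |>.2 hl1.le)
      _ ≤ ∫⁻ y in Ω, ENNReal.ofReal (Φ y (|u y| / l)) := lintegral_mono_set hSΩ
      _ ≤ 1 := hint
  have hmls : m ≤ l ^ s := by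
    rw [ENNReal.ofReal_le_one, inv_mul_le_iff₀ (by positivity), mul_one] at hmod
    exact hmod
  calc m ^ s⁻¹ ≤ (l ^ s) ^ s⁻¹ := by gcongr
    _ = l := Real.rpow_rpow_inv hl.le hs.ne'

end Luxemburg

section Integrands

variable {n : ℕ} {p r a : EuclideanSpace ℝ (Fin n) → ℝ} {y : EuclideanSpace ℝ (Fin n)}

theorem Phi2_zero (hp : p y ≠ 0) : Phi2 p r a y 0 = 0 := by
  simp [Phi2, Real.zero_rpow hp]

theorem Phi2_le_mul_rpow {M G t : ℝ} (ha : a y ≤ M) (hM : 0 ≤ M) (ht : 0 ≤ t)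
    (hG : Real.log (Real.exp 1 + t) ^ r y ≤ G) : Phi2 p r a y t ≤ (1 + M * G) * t ^ p y := by
  have hlog : 0 ≤ Real.log (Real.exp 1 + t) ^ r y :=
    Real.rpow_nonneg (zero_le_one.trans (one_le_log_exp_one_add ht)) _
  have hat : a y * Real.log (Real.exp 1 + t) ^ r y ≤ M * G :=
    mul_le_mul ha hG hlog hM
  have htp : 0 ≤ t ^ p y := Real.rpow_nonneg ht _
  rw [Phi2]
  nlinarith

theorem rpow_pStar_le_Psi {t : ℝ} (ha : 0 ≤ a y) (ht : 0 ≤ t) :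
    t ^ pStar n p y ≤ Psi p r a y t := by
  have hlog : 0 ≤ Real.log (Real.exp 1 + t / a y ^ ((p y - 1) / p y)) :=
    zero_le_one.trans (one_le_log_exp_one_add (by positivity))
  rw [Psi, le_add_iff_nonneg_right]
  positivity

theorem le_pStar {pm : ℝ} (hpm : 0 < pm) (hpy : pm ≤ p y) (hpn : p y < n) :
    (1 / pm - 1 / n)⁻¹ ≤ pStar n p y := by
  have hpos : 0 < 1 / p y - 1 / n := sub_pos.2 (one_div_lt_one_div_of_lt (hpm.trans_le hpy) hpn)
  rw [pStar]
  gcongr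

end Integrands

theorem luxNorm_Phi2_le {n : ℕ} {Ω A : Set (EuclideanSpace ℝ (Fin n))} (hA : MeasurableSet A)
    {p r a v : EuclideanSpace ℝ (Fin n) → ℝ} {τ pm pM M G K : ℝ} (hτ : 0 < τ) (hτ1 : τ ≤ 1)
    (hvol : volume (A ∩ Ω) ≤ ENNReal.ofReal τ) (hpm : 1 ≤ pm)
    (hp : ∀ y ∈ A ∩ Ω, p y ∈ Icc pm pM) (hp0 : ∀ y ∈ Ω, 0 < p y) (hM : 0 ≤ M)
    (ha : ∀ y ∈ A ∩ Ω, a y ≤ M) (hG : 0 ≤ G)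
    (hlog : ∀ y ∈ A ∩ Ω, ∀ t, 0 ≤ t → t ≤ τ⁻¹ → Real.log (Real.exp 1 + t) ^ r y ≤ G)
    (hK : 0 < K) (hv : ∀ y ∈ Ω, |v y| ≤ K) (hv0 : ∀ y ∈ Ω \ A, v y = 0) :
    luxNorm Ω (Phi2 p r a) v ≤ ENNReal.ofReal (K * ((1 + M * G) ^ (1 / pm) * τ ^ (1 / pM))) := by
  have hN : 1 ≤ 1 + M * G := le_add_of_nonneg_right (mul_nonneg hM hG)
  have hl0 : 0 < (1 + M * G) ^ (1 / pm) * τ ^ (1 / pM) := by positivity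
  refine luxNorm_le_of_le_inv hA hτ (by positivity) hvol (fun y hy => ?_) fun y hy => ?_
  · have ht : 0 ≤ |v y| / (K * ((1 + M * G) ^ (1 / pm) * τ ^ (1 / pM))) := by positivity
    have htle : |v y| / (K * ((1 + M * G) ^ (1 / pm) * τ ^ (1 / pM))) ≤
        ((1 + M * G) ^ (1 / pm) * τ ^ (1 / pM))⁻¹ := by
      rw [div_le_iff₀ (by positivity), mul_left_comm, inv_mul_cancel₀ hl0.ne', mul_one]
      exact hv y hy.2
    have hbound := mul_rpow_le_inv hN hτ hτ1 (by positivity) (hp y hy) ht htle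
    have hτl : τ ≤ (1 + M * G) ^ (1 / pm) * τ ^ (1 / pM) := by
      have hpM : 1 ≤ pM := hpm.trans ((hp y hy).1.trans (hp y hy).2)
      calc τ = 1 * τ := (one_mul τ).symm
        _ ≤ (1 + M * G) ^ (1 / pm) * τ ^ (1 / pM) := by
          gcongr
          · exact Real.one_le_rpow hN (by positivity)
          · exact Real.self_le_rpow_of_le_one hτ.le hτ1 ((div_le_one₀ (by positivity)).2 hpM)
    exact (Phi2_le_mul_rpow (ha y hy) hM ht
      (hlog y hy _ ht (htle.trans (inv_anti₀ hτ hτl)))).trans hbound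
  · rw [hv0 y hy, abs_zero, zero_div, Phi2_zero (hp0 y hy.1).ne']

theorem ofReal_rpow_le_luxNorm_Psi {n : ℕ} {Ω S : Set (EuclideanSpace ℝ (Fin n))}
    (hS : MeasurableSet S) (hSΩ : S ⊆ Ω) {p r a u : EuclideanSpace ℝ (Fin n) → ℝ} {m pm : ℝ}
    (hm : 0 ≤ m) (hm1 : m ≤ 1) (hvol : ENNReal.ofReal m ≤ volume S) (hpm : 0 < pm)
    (hpmn : pm < n) (hp : ∀ y ∈ S, pm ≤ p y ∧ p y < n) (ha : ∀ y ∈ S, 0 ≤ a y)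
    (hu : ∀ y ∈ S, |u y| = 1) :
    ENNReal.ofReal (m ^ (1 / pm - 1 / n)) ≤ luxNorm Ω (Psi p r a) u := by
  have hs : 0 < 1 / pm - 1 / n := sub_pos.2 (one_div_lt_one_div_of_lt hpm hpmn)
  have := ofReal_rpow_inv_le_luxNorm (Φ := Psi p r a) hS hSΩ hm hm1 (inv_pos.2 hs) hvol hu
    fun y hy t ht =>
      (Real.rpow_le_rpow_of_exponent_le ht (le_pStar hpm (hp y hy).1 (hp y hy).2)).trans
      (rpow_pStar_le_Psi (ha y hy) (by linarith))
  rwa [inv_inv] at this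

def SobolevEmbeddingIneq {n : ℕ} (Ω : Set (EuclideanSpace ℝ (Fin n)))
    (p r a : EuclideanSpace ℝ (Fin n) → ℝ) (c₁ : ℝ) : Prop :=
  ∀ u : EuclideanSpace ℝ (Fin n) → ℝ, ContDiff ℝ 1 u → HasCompactSupport u →
    luxNorm Ω (Psi p r a) u ≤ ENNReal.ofReal c₁ * (luxNorm Ω (Phi2 p r a) u +
      luxNorm Ω (Phi2 p r a) (fun x => ‖fderiv ℝ u x‖))

section Embedding

variable {n : ℕ} {Ω : Set (EuclideanSpace ℝ (Fin n))} {p r a : EuclideanSpace ℝ (Fin n) → ℝ}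
  {c₁ : ℝ} {K : NNReal} {x : EuclideanSpace ℝ (Fin n)} {R Rt τ pm pM M G : ℝ}

theorem rpow_half_le_of_embedding (hΩ : IsOpen Ω) (hc₁ : 0 ≤ c₁)
    (hemb : SobolevEmbeddingIneq Ω p r a c₁)
    (hK0 : 0 < K) (hK : LipschitzWith K Real.smoothTransition) (hRt : 0 < Rt) (hRtR : Rt < R)
    (hvol : volume (Metric.ball x R ∩ Ω) = ENNReal.ofReal τ) (hτ : 0 < τ) (hτ1 : τ ≤ 1)
    (hhalf : volume (Metric.ball x Rt ∩ Ω) = volume (Metric.ball x R ∩ Ω) / 2)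
    (hpm : 1 ≤ pm) (hpM : pM < n) (hp : ∀ y ∈ Metric.ball x R ∩ Ω, p y ∈ Icc pm pM)
    (hp0 : ∀ y ∈ Ω, 0 < p y) (hM : 0 ≤ M) (ha0 : ∀ y ∈ Metric.ball x R ∩ Ω, 0 ≤ a y)
    (ha : ∀ y ∈ Metric.ball x R ∩ Ω, a y ≤ M) (hG : 0 ≤ G)
    (hlog : ∀ y ∈ Metric.ball x R ∩ Ω, ∀ t, 0 ≤ t → t ≤ τ⁻¹ →
      Real.log (Real.exp 1 + t) ^ r y ≤ G) :
    (τ / 2) ^ (1 / pm - 1 / n) ≤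
      c₁ * ((1 + 2 * K / (R - Rt)) * ((1 + M * G) ^ (1 / pm) * τ ^ (1 / pM))) := by
  have hδ : 0 < R - Rt := sub_pos.2 hRtR
  obtain ⟨u, hu, hu01, hu1, hsupp, hgrad⟩ :=
    exists_contDiff_cutoff hK x hRt (lt_add_of_pos_right Rt (half_pos hδ))
  have hcs : HasCompactSupport u :=
    (isCompact_closedBall _ _).of_isClosed_subset (isClosed_tsupport u) hsupp
  have hsuppR : ∀ y ∈ Ω \ Metric.ball x R, y ∉ tsupport u := fun y hy hyu =>
    hy.2 (Metric.closedBall_subset_ball (by linarith) (hsupp hyu))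
  have hSA : Metric.ball x Rt ∩ Ω ⊆ Metric.ball x R ∩ Ω :=
    inter_subset_inter_left _ (Metric.ball_subset_ball hRtR.le)
  obtain ⟨y₀, hy₀⟩ : (Metric.ball x R ∩ Ω).Nonempty :=
    nonempty_of_measure_ne_zero (by rw [hvol]; exact (ENNReal.ofReal_pos.2 hτ).ne')
  have hlower : ENNReal.ofReal ((τ / 2) ^ (1 / pm - 1 / n)) ≤ luxNorm Ω (Psi p r a) u := by
    refine ofReal_rpow_le_luxNorm_Psi (Metric.isOpen_ball.inter hΩ).measurableSet
      inter_subset_right (by positivity) (by linarith) ?_ (by positivity)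
      (((hp y₀ hy₀).1.trans (hp y₀ hy₀).2).trans_lt hpM) (fun y hy => ⟨(hp y (hSA hy)).1,
        (hp y (hSA hy)).2.trans_lt hpM⟩) (fun y hy => ha0 y (hSA hy)) fun y hy => ?_
    · rw [hhalf, hvol, ENNReal.ofReal_div_of_pos two_pos, ENNReal.ofReal_ofNat]
    · rw [hu1 y (Metric.ball_subset_closedBall hy.1), abs_one]
  have hupper := fun {v : EuclideanSpace ℝ (Fin n) → ℝ} {k : ℝ} (hk : 0 < k) =>
    luxNorm_Phi2_le (v := v) (K := k) Metric.isOpen_ball.measurableSet hτ hτ1 hvol.le hpm hp hp0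
      hM ha hG hlog hk
  have hu_up := hupper (v := u) one_pos
    (fun y _ => by rw [abs_of_nonneg (hu01 y).1]; exact (hu01 y).2)
    fun y hy => image_eq_zero_of_notMem_tsupport (hsuppR y hy)
  have hgrad_up := hupper (v := fun y => ‖fderiv ℝ u y‖) (k := 2 * K / (R - Rt))
    (by positivity) (fun y _ => by
      rw [abs_norm]
      exact (hgrad y).trans_eq (by rw [add_sub_cancel_left, div_div_eq_mul_div, mul_comm]))
    fun y hy => by simp [fderiv_of_notMem_tsupport ℝ (hsuppR y hy)]
  have := hlower.trans
    ((hemb u hu hcs).trans (mul_le_mul_right (add_le_add hu_up hgrad_up) _))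
  rwa [← ENNReal.ofReal_add (by positivity) (by positivity), ← ENNReal.ofReal_mul hc₁,
    ENNReal.ofReal_le_ofReal_iff (by positivity), ← add_mul] at this

theorem sub_le_of_embedding (hΩ : IsOpen Ω) (hc₁ : 0 ≤ c₁)
    (hemb : SobolevEmbeddingIneq Ω p r a c₁)
    (hK0 : 0 < K) (hK : LipschitzWith K Real.smoothTransition) (hRt : 0 < Rt) (hR1 : R ≤ 1)
    (hvol : volume (Metric.ball x R ∩ Ω) = ENNReal.ofReal τ) (hτ : 0 < τ) (hτ1 : τ ≤ 1)
    (hhalf : volume (Metric.ball x Rt ∩ Ω) = volume (Metric.ball x R ∩ Ω) / 2)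
    (hpm : 1 ≤ pm) (hpM : pM < n) (hp : ∀ y ∈ Metric.ball x R ∩ Ω, p y ∈ Icc pm pM)
    (hp0 : ∀ y ∈ Ω, 0 < p y) (hM : 0 ≤ M) (ha0 : ∀ y ∈ Metric.ball x R ∩ Ω, 0 ≤ a y)
    (ha : ∀ y ∈ Metric.ball x R ∩ Ω, a y ≤ M) (hG : 1 ≤ G)
    (hlog : ∀ y ∈ Metric.ball x R ∩ Ω, ∀ t, 0 ≤ t → t ≤ τ⁻¹ →
      Real.log (Real.exp 1 + t) ^ r y ≤ G) :
    R - Rt ≤ 2 * c₁ * (1 + 2 * K) * (1 + M) ^ (1 / pm) * G * τ ^ (1 / pM - 1 / pm + 1 / n) := by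
  rcases le_or_gt R Rt with hRRt | hRtR
  · exact (sub_nonpos.2 hRRt).trans (by positivity)
  have hδ : 0 < R - Rt := sub_pos.2 hRtR
  have he : 1 / pm - 1 / n ≤ 1 := by
    have : 1 / pm ≤ 1 := (div_le_one₀ (by positivity)).2 hpm
    have : (0 : ℝ) ≤ 1 / n := by positivity
    linarith
  have hmain := rpow_half_le_of_embedding hΩ hc₁ hemb hK0 hK hRt hRtR hvol hτ hτ1 hhalf hpm hpM hp
    hp0 hM ha0 ha (by linarith) hlog
  refine le_of_mul_le_mul_right ?_ (by positivity : 0 < (τ / 2) ^ (1 / pm - 1 / n))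
  calc (R - Rt) * (τ / 2) ^ (1 / pm - 1 / n)
      ≤ (R - Rt) * (c₁ * ((1 + 2 * K / (R - Rt)) * ((1 + M * G) ^ (1 / pm) * τ ^ (1 / pM)))) :=
        mul_le_mul_of_nonneg_left hmain hδ.le
    _ = c₁ * (R - Rt + 2 * K) * ((1 + M * G) ^ (1 / pm) * τ ^ (1 / pM)) := by
        field_simp
    _ ≤ c₁ * (1 + 2 * K) * ((1 + M) ^ (1 / pm) * G * τ ^ (1 / pM)) := by
        gcongr
        · linarith
        · exact one_add_mul_rpow_le hM hG hpm
    _ = c₁ * (1 + 2 * K) * (1 + M) ^ (1 / pm) * G * τ ^ (1 / pM - 1 / pm + 1 / n) *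
          τ ^ (1 / pm - 1 / n) := by
        rw [mul_assoc _ (τ ^ _), ← Real.rpow_add hτ]
        ring_nf
    _ ≤ c₁ * (1 + 2 * K) * (1 + M) ^ (1 / pm) * G * τ ^ (1 / pM - 1 / pm + 1 / n) *
          (2 * (τ / 2) ^ (1 / pm - 1 / n)) := by
        gcongr
        exact rpow_le_two_mul_half_rpow hτ.le he
    _ = 2 * c₁ * (1 + 2 * K) * (1 + M) ^ (1 / pm) * G * τ ^ (1 / pM - 1 / pm + 1 / n) *
          (τ / 2) ^ (1 / pm - 1 / n) := by ring

end Embedding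

theorem bddAbove_image_of_abs_sub_le_div_log {X : Type*} [PseudoMetricSpace X] {s : Set X}
    {f : X → ℝ} {C : ℝ} (hC : 0 ≤ C)
    (hf : ∀ x ∈ s, ∀ y ∈ s, x ≠ y → |f x - f y| ≤ C / Real.log (Real.exp 1 + 1 / dist x y)) :
    BddAbove (f '' s) := by
  rcases s.eq_empty_or_nonempty with rfl | ⟨y, hy⟩
  · simp
  refine ⟨f y + C, forall_mem_image.2 fun x hx => ?_⟩
  rcases eq_or_ne x y with rfl | hxy
  · linarith
  have := (hf x hx y hy hxy).trans (div_le_self hC (one_le_log_exp_one_add (by positivity)))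
  linarith [(abs_le.1 this).2]

theorem sub_le_of_log_rpow_le {n : ℕ} {Ω : Set (EuclideanSpace ℝ (Fin n))} (hΩ : IsOpen Ω)
    {p r a : EuclideanSpace ℝ (Fin n) → ℝ} (hp1 : ∀ y ∈ Ω, 1 ≤ p y) (hpB : BddAbove (p '' Ω))
    (hpn : sSup (p '' Ω) < n) (ha0 : ∀ y ∈ Ω, 0 ≤ a y) (haB : BddAbove (a '' Ω)) {c₁ : ℝ}
    (hc₁ : 0 ≤ c₁)
    (hemb : SobolevEmbeddingIneq Ω p r a c₁)
    {K : NNReal} (hK0 : 0 < K) (hK : LipschitzWith K Real.smoothTransition)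
    {x : EuclideanSpace ℝ (Fin n)} (hx : x ∈ closure Ω) {R : ℝ} (hR : R ∈ Ioc (0 : ℝ) 1)
    (hvol : volume (Metric.ball x R ∩ Ω) ≤ 1) {Rt : ℝ} (hRt : 0 < Rt)
    (hhalf : volume (Metric.ball x Rt ∩ Ω) = volume (Metric.ball x R ∩ Ω) / 2) {G : ℝ}
    (hG : 1 ≤ G) (hlog : ∀ y ∈ Metric.ball x R ∩ Ω, ∀ t, 0 ≤ t →
      t ≤ (volume (Metric.ball x R ∩ Ω)).toReal⁻¹ → Real.log (Real.exp 1 + t) ^ r y ≤ G) :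
    R - Rt ≤ 2 * c₁ * (1 + 2 * K) * (1 + sSup (a '' Ω)) ^ (1 / sInf (p '' Ω)) * G *
      (volume (Metric.ball x R ∩ Ω)).toReal ^ (1 / sSup (p '' (Metric.ball x R ∩ Ω)) -
        1 / sInf (p '' (Metric.ball x R ∩ Ω)) + 1 / (n : ℝ)) := by
  set A := Metric.ball x R ∩ Ω
  have hAΩ : A ⊆ Ω := inter_subset_right
  obtain ⟨y₀, hy₀⟩ : A.Nonempty := by
    obtain ⟨y, hy, hxy⟩ := Metric.mem_closure_iff.1 hx R hR.1
    exact ⟨y, Metric.mem_ball'.2 hxy, hy⟩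
  have hτ : 0 < (volume A).toReal := ENNReal.toReal_pos
    ((Metric.isOpen_ball.inter hΩ).measure_pos volume ⟨y₀, hy₀⟩).ne'
    (hvol.trans_lt ENNReal.one_lt_top).ne
  have hτ1 : (volume A).toReal ≤ 1 := ENNReal.toReal_le_of_le_ofReal zero_le_one (by simpa)
  have hpb : BddBelow (p '' Ω) := ⟨1, forall_mem_image.2 hp1⟩
  have hpmΩ : 1 ≤ sInf (p '' Ω) :=
    le_csInf ⟨_, mem_image_of_mem p (hAΩ hy₀)⟩ (forall_mem_image.2 hp1)
  have hpm : sInf (p '' Ω) ≤ sInf (p '' A) :=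
    csInf_le_csInf hpb ⟨_, mem_image_of_mem p hy₀⟩ (image_mono hAΩ)
  have hM : 0 ≤ sSup (a '' Ω) := Real.sSup_nonneg (forall_mem_image.2 ha0)
  refine (sub_le_of_embedding hΩ hc₁ hemb hK0 hK hRt hR.2 (ENNReal.ofReal_toReal
    (hvol.trans_lt ENNReal.one_lt_top).ne).symm hτ hτ1 hhalf (hpmΩ.trans hpm)
    ((csSup_le_csSup hpB ⟨_, mem_image_of_mem p hy₀⟩ (image_mono hAΩ)).trans_lt hpn)
    (fun y hy => ⟨csInf_le (hpb.mono (image_mono hAΩ)) (mem_image_of_mem p hy),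
      le_csSup (hpB.mono (image_mono hAΩ)) (mem_image_of_mem p hy)⟩)
    (fun y hy => zero_lt_one.trans_le (hp1 y hy)) hM (fun y hy => ha0 y hy.2)
    (fun y hy => le_csSup haB (mem_image_of_mem a hy.2)) hG hlog).trans ?_
  gcongr
  linarith

theorem stmt_16_general {n : ℕ}
    (Ω : Set (EuclideanSpace ℝ (Fin n))) (hΩo : IsOpen Ω)
    (p r a : EuclideanSpace ℝ (Fin n) → ℝ)
    (hp1 : ∀ x ∈ closure Ω, 1 ≤ p x)
    (Clog : ℝ) (hClog : 0 < Clog)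
    (hpLH : ∀ x ∈ closure Ω, ∀ y ∈ closure Ω, x ≠ y →
      |p x - p y| ≤ Clog / Real.log (Real.exp 1 + 1 / dist x y))
    (hpn : sSup (p '' Ω) < n)
    (hrB : BddAbove (r '' Ω))
    (ha0 : ∀ x ∈ Ω, 0 ≤ a x) (haB : BddAbove (a '' Ω))
    (c₁ : ℝ) (hc₁ : 0 < c₁)
    (hemb : ∀ u : EuclideanSpace ℝ (Fin n) → ℝ,
      ContDiff ℝ 1 u → HasCompactSupport u →
      luxNorm Ω (Psi p r a) u ≤
        ENNReal.ofReal c₁ * (luxNorm Ω (Phi2 p r a) u +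
          luxNorm Ω (Phi2 p r a) (fun x => ‖fderiv ℝ u x‖))) :
    ∃ C : ℝ, 0 < C ∧
      ((∀ x ∈ Ω, r x < 0) →
        ∀ x ∈ closure Ω, ∀ R : ℝ, R ∈ Set.Ioc (0:ℝ) 1 →
          volume (Metric.ball x R ∩ Ω) ≤ 1 →
          ∀ Rt : ℝ, IsLeast {s : ℝ | 0 < s ∧ s ≤ R ∧
              volume (Metric.ball x s ∩ Ω) = volume (Metric.ball x R ∩ Ω) / 2} Rt →
          R - Rt ≤ C * (1 + sSup (a '' Ω)) ^ (1 / sInf (p '' Ω)) *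
            (2:ℝ) ^ (1 / sInf (p '' Ω) - 1 / (n:ℝ) + 1) *
            (volume (Metric.ball x R ∩ Ω)).toReal ^
              (1 / sSup (p '' (Metric.ball x R ∩ Ω)) -
                1 / sInf (p '' (Metric.ball x R ∩ Ω)) + 1 / (n:ℝ))) ∧
      (((∃ x ∈ Ω, r x < 0) ∧ (∃ x ∈ Ω, 0 ≤ r x)) →
        ∀ x ∈ closure Ω, ∀ R : ℝ, R ∈ Set.Ioc (0:ℝ) 1 →
          volume (Metric.ball x R ∩ Ω) ≤ 1 →
          volume (Metric.ball x R ∩ Ω) < 1/2 →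
          0 ≤ sSup (r '' (Metric.ball x R ∩ Ω)) →
          ∀ Rt : ℝ, IsLeast {s : ℝ | 0 < s ∧ s ≤ R ∧
              volume (Metric.ball x s ∩ Ω) = volume (Metric.ball x R ∩ Ω) / 2} Rt →
          R - Rt ≤ C * (1 + sSup (a '' Ω)) ^ (1 / sInf (p '' Ω)) *
            (2:ℝ) ^ (1 / sInf (p '' Ω) - 1 / (n:ℝ)) *
            (volume (Metric.ball x R ∩ Ω)).toReal ^
              (1 / sSup (p '' (Metric.ball x R ∩ Ω)) -
                1 / sInf (p '' (Metric.ball x R ∩ Ω)) + 1 / (n:ℝ)) *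
            (Real.log (Real.exp 1 + 1 / (volume (Metric.ball x R ∩ Ω)).toReal)) ^
              sSup (r '' (Metric.ball x R ∩ Ω))) := by
  obtain ⟨K, hK0, hK⟩ := Real.smoothTransition.exists_lipschitzWith
  have hp1Ω : ∀ y ∈ Ω, 1 ≤ p y := fun y hy => hp1 y (subset_closure hy)
  have hpB : BddAbove (p '' Ω) :=
    (bddAbove_image_of_abs_sub_le_div_log hClog.le hpLH).mono (image_mono subset_closure)
  have hM : 0 ≤ sSup (a '' Ω) := Real.sSup_nonneg (forall_mem_image.2 ha0)
  have hpmΩ : 0 ≤ sInf (p '' Ω) :=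
    Real.sInf_nonneg (forall_mem_image.2 fun y hy => zero_le_one.trans (hp1Ω y hy))
  have hcore := fun {x} hx {R} hR hvol {Rt} (hRt : IsLeast {s : ℝ | 0 < s ∧ s ≤ R ∧
      volume (Metric.ball x s ∩ Ω) = volume (Metric.ball x R ∩ Ω) / 2} Rt) {G : ℝ} =>
    sub_le_of_log_rpow_le (G := G) hΩo hp1Ω hpB hpn ha0 haB hc₁.le hemb hK0 hK hx hR hvol
      hRt.1.1 hRt.1.2.2
  refine ⟨2 * c₁ * (1 + 2 * K), by positivity, fun hneg x hx R hR hvol Rt hRt => ?_,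
    fun ⟨⟨y₀, hy₀, _⟩, _⟩ x hx R hR hvol _ hsup Rt hRt => ?_⟩
  · refine (hcore hx hR hvol hRt le_rfl fun y hy t ht htle => ?_).trans ?_
    · simpa using log_exp_one_add_rpow_le ht htle (hneg y hy.2).le le_rfl
    gcongr
    refine Real.one_le_rpow one_le_two ?_
    have : (1 : ℝ) / n ≤ 1 := by simpa using Nat.cast_inv_le_one n
    have : (0 : ℝ) ≤ 1 / sInf (p '' Ω) := by positivity
    linarith
  · set τ := (volume (Metric.ball x R ∩ Ω)).toReal
    have hG : 1 ≤ Real.log (Real.exp 1 + 1 / τ) ^ sSup (r '' (Metric.ball x R ∩ Ω)) :=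
      Real.one_le_rpow (one_le_log_exp_one_add (by positivity)) hsup
    refine (hcore hx hR hvol hRt hG fun y hy t ht htle =>
      log_exp_one_add_rpow_le ht (htle.trans_eq (one_div τ).symm)
        (le_csSup (hrB.mono (image_mono inter_subset_right)) (mem_image_of_mem r hy)) hsup).trans ?_
    rw [mul_right_comm _ (Real.log (Real.exp 1 + 1 / τ) ^ _) (τ ^ _)]
    gcongr ?_ * _ * _
    refine le_mul_of_one_le_right (by positivity) (Real.one_le_rpow one_le_two (sub_nonneg.2 ?_))
    have hpmΩ1 : 1 ≤ sInf (p '' Ω) :=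
      le_csInf ⟨_, mem_image_of_mem p hy₀⟩ (forall_mem_image.2 hp1Ω)
    have hpmΩn : sInf (p '' Ω) ≤ n := (csInf_le_csSup ⟨_, mem_image_of_mem p hy₀⟩
      ⟨1, forall_mem_image.2 hp1Ω⟩ hpB).trans hpn.le
    exact one_div_le_one_div_of_le (by linarith) hpmΩn

/-- under the embedding hypothesis, there is `C > 0` (depending only on
`n, c₁`) such that, with `A_R = B_R(x) ∩ Ω` and `R̃` the smallest radius in `(0,R]`
with `|A_{R̃}| = |A_R|/2`: (i) if `r < 0` everywhere on `Ω`, then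
`R − R̃ ≤ C(1+‖a‖_∞)^{1/p⁻} 2^{1/p⁻−1/n+1} |A_R|^{1/p⁺_{A_R}−1/p⁻_{A_R}+1/n}`;
(ii) if `r` takes both a negative and a nonnegative value on `Ω`, and `|A_R| < 1/2`
with `sup_{A_R} r ≥ 0`, then
`R − R̃ ≤ C(1+‖a‖_∞)^{1/p⁻} 2^{1/p⁻−1/n} |A_R|^{1/p⁺_{A_R}−1/p⁻_{A_R}+1/n}
(log(e+1/|A_R|))^{r⁺_{A_R}}`. -/
theorem stmt_16 {n : ℕ} (hn : 2 ≤ n)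
    (Ω : Set (EuclideanSpace ℝ (Fin n))) (hΩo : IsOpen Ω)
    (p r a : EuclideanSpace ℝ (Fin n) → ℝ)
    (hp1 : ∀ x ∈ closure Ω, 1 ≤ p x)
    (Clog : ℝ) (hClog : 0 < Clog)
    (hpLH : ∀ x ∈ closure Ω, ∀ y ∈ closure Ω, x ≠ y →
      |p x - p y| ≤ Clog / Real.log (Real.exp 1 + 1 / dist x y))
    (hpn : sSup (p '' Ω) < n)
    (hrB : BddAbove (r '' Ω)) (hrb : BddBelow (r '' Ω))
    (ha0 : ∀ x ∈ Ω, 0 ≤ a x) (haB : BddAbove (a '' Ω))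
    (c₁ : ℝ) (hc₁ : 0 < c₁)
    (hemb : ∀ u : EuclideanSpace ℝ (Fin n) → ℝ,
      ContDiff ℝ 1 u → HasCompactSupport u →
      luxNorm Ω (Psi p r a) u ≤
        ENNReal.ofReal c₁ * (luxNorm Ω (Phi2 p r a) u +
          luxNorm Ω (Phi2 p r a) (fun x => ‖fderiv ℝ u x‖))) :
    ∃ C : ℝ, 0 < C ∧
      ((∀ x ∈ Ω, r x < 0) →
        ∀ x ∈ closure Ω, ∀ R : ℝ, R ∈ Set.Ioc (0:ℝ) 1 →
          volume (Metric.ball x R ∩ Ω) ≤ 1 →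
          ∀ Rt : ℝ, IsLeast {s : ℝ | 0 < s ∧ s ≤ R ∧
              volume (Metric.ball x s ∩ Ω) = volume (Metric.ball x R ∩ Ω) / 2} Rt →
          R - Rt ≤ C * (1 + sSup (a '' Ω)) ^ (1 / sInf (p '' Ω)) *
            (2:ℝ) ^ (1 / sInf (p '' Ω) - 1 / (n:ℝ) + 1) *
            (volume (Metric.ball x R ∩ Ω)).toReal ^
              (1 / sSup (p '' (Metric.ball x R ∩ Ω)) -
                1 / sInf (p '' (Metric.ball x R ∩ Ω)) + 1 / (n:ℝ))) ∧
      (((∃ x ∈ Ω, r x < 0) ∧ (∃ x ∈ Ω, 0 ≤ r x)) →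
        ∀ x ∈ closure Ω, ∀ R : ℝ, R ∈ Set.Ioc (0:ℝ) 1 →
          volume (Metric.ball x R ∩ Ω) ≤ 1 →
          volume (Metric.ball x R ∩ Ω) < 1/2 →
          0 ≤ sSup (r '' (Metric.ball x R ∩ Ω)) →
          ∀ Rt : ℝ, IsLeast {s : ℝ | 0 < s ∧ s ≤ R ∧
              volume (Metric.ball x s ∩ Ω) = volume (Metric.ball x R ∩ Ω) / 2} Rt →
          R - Rt ≤ C * (1 + sSup (a '' Ω)) ^ (1 / sInf (p '' Ω)) *
            (2:ℝ) ^ (1 / sInf (p '' Ω) - 1 / (n:ℝ)) *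
            (volume (Metric.ball x R ∩ Ω)).toReal ^
              (1 / sSup (p '' (Metric.ball x R ∩ Ω)) -
                1 / sInf (p '' (Metric.ball x R ∩ Ω)) + 1 / (n:ℝ)) *
            (Real.log (Real.exp 1 + 1 / (volume (Metric.ball x R ∩ Ω)).toReal)) ^
              sSup (r '' (Metric.ball x R ∩ Ω))) :=
  stmt_16_general Ω hΩo p r a hp1 Clog hClog hpLH hpn hrB ha0 haB c₁ hc₁ hemb
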